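/- arXiv:2201.10483 — 5 statements merged into one kernel-verified Lean document; each statement's English description precedes it below -/
import Mathlib

section
/- With the setup of multi-agent location-scale performative prediction (gradient gⁱ(θ⃗) = 2A(θⁱ + Σ_j λ_j θʲ) − 2b for agent i), the partial derivative of the potential Φ(θ⃗) = (Σ_i λ_i θⁱ)ᵀA(Σ_i λ_i θⁱ) + Σ_i λ_i (θⁱ)ᵀAθⁱ − 2bᵀΣ_i λ_i θⁱ with respect to θⁱ_k equals λ_i · gⁱ_k(θ⃗), i.e., ∇_{θⁱ}Φ(θ⃗) = 2λ_i(A(θⁱ + Σ_j λ_j θʲ) − b). -/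
/-! Every term of `Φ` is a linear or a symmetric quadratic function of `θ⃗`, and
`t ↦ u(t)ᵀ A u(t)` has derivative `2 u'ᵀ A u` when `A` is symmetric. Moving `θⁱ_k` moves the
mean `Σ_j λ_j θʲ` in direction `λ_i e_k` and, among the self terms, only `λ_i (θⁱ)ᵀ A θⁱ`;
collecting the three contributions gives `2 λ_i e_kᵀ (A (θⁱ + Σ_j λ_j θʲ) - b)`. -/

open Matrix

section DotProductCalculus

variable {𝕜 ι : Type*} [NontriviallyNormedField 𝕜] [Fintype ι] {u v : 𝕜 → ι → 𝕜}
  {u' v' : ι → 𝕜} {x : 𝕜}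

theorem HasDerivAt.dotProduct (hu : HasDerivAt u u' x) (hv : HasDerivAt v v' x) :
    HasDerivAt (fun t => u t ⬝ᵥ v t) (u' ⬝ᵥ v x + u x ⬝ᵥ v') x := by
  have h := HasDerivAt.fun_sum (u := Finset.univ) fun j _ =>
    (hasDerivAt_pi.1 hu j).fun_mul (hasDerivAt_pi.1 hv j)
  rw [Finset.sum_add_distrib] at h
  exact h

theorem HasDerivAt.mulVec {m : Type*} (A : Matrix m ι 𝕜) (hu : HasDerivAt u u' x) :
    HasDerivAt (fun t => A *ᵥ u t) (A *ᵥ u') x :=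
  hasDerivAt_pi.2 fun j => by
    have h := (hasDerivAt_const x (A j)).dotProduct hu
    rw [zero_dotProduct, zero_add] at h
    exact h

theorem Matrix.IsSymm.dotProduct_mulVec_comm {A : Matrix ι ι 𝕜} (hA : A.IsSymm)
    (v w : ι → 𝕜) :
    v ⬝ᵥ A *ᵥ w = w ⬝ᵥ A *ᵥ v := by
  rw [dotProduct_mulVec, ← mulVec_transpose, hA.eq, dotProduct_comm]

theorem HasDerivAt.dotProduct_mulVec_self {A : Matrix ι ι 𝕜} (hA : A.IsSymm)
    (hu : HasDerivAt u u' x) :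
    HasDerivAt (fun t => u t ⬝ᵥ A *ᵥ u t) (2 * (u' ⬝ᵥ A *ᵥ u x)) x := by
  convert hu.dotProduct (hu.mulVec A) using 1
  rw [hA.dotProduct_mulVec_comm (u x), two_mul]

end DotProductCalculus

section Potential

variable {𝕜 N ι : Type*} [NontriviallyNormedField 𝕜] [Fintype N] [Fintype ι]

def potential (A : Matrix ι ι 𝕜) (b : ι → 𝕜) (lam : N → 𝕜) (ϑ : N → ι → 𝕜) : 𝕜 :=
  (∑ j, lam j • ϑ j) ⬝ᵥ A *ᵥ (∑ j, lam j • ϑ j) + ∑ j, lam j * (ϑ j ⬝ᵥ A *ᵥ ϑ j)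
    - 2 * (b ⬝ᵥ ∑ j, lam j • ϑ j)

theorem HasDerivAt.potential {A : Matrix ι ι 𝕜} (hA : A.IsSymm) (b : ι → 𝕜) (lam : N → 𝕜)
    {c : 𝕜 → N → ι → 𝕜} {c' : N → ι → 𝕜} {x : 𝕜} (hc : HasDerivAt c c' x) :
    HasDerivAt (fun t => potential A b lam (c t))
      (2 * ((∑ j, lam j • c' j) ⬝ᵥ A *ᵥ ∑ j, lam j • c x j)
        + ∑ j, lam j * (2 * (c' j ⬝ᵥ A *ᵥ c x j)) - 2 * (b ⬝ᵥ ∑ j, lam j • c' j)) x := by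
  have hcomp (j : N) : HasDerivAt (fun t => c t j) (c' j) x := hasDerivAt_pi.1 hc j
  have hmean : HasDerivAt (fun t => ∑ j, lam j • c t j) (∑ j, lam j • c' j) x :=
    HasDerivAt.fun_sum fun j _ => (hcomp j).const_smul (lam j)
  have hlin := ((hasDerivAt_const x b).dotProduct hmean).const_mul 2
  rw [zero_dotProduct, zero_add] at hlin
  have hself : HasDerivAt (fun t => ∑ j, lam j * (c t j ⬝ᵥ A *ᵥ c t j))
      (∑ j, lam j * (2 * (c' j ⬝ᵥ A *ᵥ c x j))) x :=
    HasDerivAt.fun_sum fun j _ => ((hcomp j).dotProduct_mulVec_self hA).const_mul (lam j)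
  exact ((hmean.dotProduct_mulVec_self hA).add hself).sub hlin

theorem HasDerivAt.potential_of_single [DecidableEq N] {A : Matrix ι ι 𝕜} (hA : A.IsSymm)
    (b : ι → 𝕜) (lam : N → 𝕜) {c : 𝕜 → N → ι → 𝕜} {i : N} {v : ι → 𝕜} {x : 𝕜}
    (hc : HasDerivAt c (Pi.single i v) x) :
    HasDerivAt (fun t => _root_.potential A b lam (c t))
      (2 * lam i * (v ⬝ᵥ (A *ᵥ (c x i + ∑ j, lam j • c x j) - b))) x := by
  refine (hc.potential hA b lam).congr_deriv ?_
  have hmean : ∑ j, lam j • (Pi.single i v : N → ι → 𝕜) j = lam i • v := by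
    rw [Finset.sum_eq_single i (fun j _ hj => by simp [hj]) (by simp), Pi.single_eq_same]
  have hself : ∑ j, lam j * (2 * ((Pi.single i v : N → ι → 𝕜) j ⬝ᵥ A *ᵥ c x j))
      = lam i * (2 * (v ⬝ᵥ A *ᵥ c x i)) := by
    rw [Finset.sum_eq_single i (fun j _ hj => by simp [hj]) (by simp), Pi.single_eq_same]
  rw [hmean, hself, dotProduct_comm b, mulVec_add, dotProduct_sub, dotProduct_add]
  simp only [smul_dotProduct, smul_eq_mul]
  ring

end Potential

theorem hasDerivAt_update_update {𝕜 N ι : Type*} [NontriviallyNormedField 𝕜]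
    [DecidableEq N] [Fintype N] [DecidableEq ι] [Fintype ι] (θ : N → ι → 𝕜) (i : N) (k : ι)
    (y : 𝕜) :
    HasDerivAt (fun t => Function.update θ i (Function.update (θ i) k t))
      (Pi.single i (Pi.single k 1)) y := by
  refine hasDerivAt_pi.2 fun j => ?_
  rcases eq_or_ne j i with rfl | hji
  · simpa using hasDerivAt_update (θ j) k y
  · simpa [hji] using hasDerivAt_const y (θ j)

theorem potential_partial_deriv_general (n d : ℕ) (A : Matrix (Fin d) (Fin d) ℝ) (hA : A.IsSymm)
    (b : Fin d → ℝ) (lam : Fin n → ℝ)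
    (θ : Fin n → Fin d → ℝ) (i : Fin n) (k : Fin d) :
    let Φ : (Fin n → Fin d → ℝ) → ℝ := fun ϑ =>
      (∑ j, lam j • ϑ j) ⬝ᵥ A.mulVec (∑ j, lam j • ϑ j)
        + ∑ j, lam j * (ϑ j ⬝ᵥ A.mulVec (ϑ j))
        - 2 * (b ⬝ᵥ ∑ j, lam j • ϑ j)
    let g : Fin d → ℝ := fun l => 2 * (A.mulVec (θ i + ∑ j, lam j • θ j) l - b l)
    HasDerivAt (fun t => Φ (Function.update θ i (Function.update (θ i) k t)))
      (lam i * g k) (θ i k) := by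
  intro Φ g
  have h := (hasDerivAt_update_update θ i k (θ i k)).potential_of_single hA b lam
  simp only [Function.update_eq_self, single_one_dotProduct] at h
  refine h.congr_deriv ?_
  simp only [g, Pi.sub_apply]
  ring

theorem potential_partial_deriv (n d : ℕ) (A : Matrix (Fin d) (Fin d) ℝ) (hA : A.IsSymm)
    (b : Fin d → ℝ) (lam : Fin n → ℝ) (hlam : ∀ i, 0 < lam i)
    (θ : Fin n → Fin d → ℝ) (i : Fin n) (k : Fin d) :
    let Φ : (Fin n → Fin d → ℝ) → ℝ := fun ϑ =>
      (∑ j, lam j • ϑ j) ⬝ᵥ A.mulVec (∑ j, lam j • ϑ j)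
        + ∑ j, lam j * (ϑ j ⬝ᵥ A.mulVec (ϑ j))
        - 2 * (b ⬝ᵥ ∑ j, lam j • ϑ j)
    let g : Fin d → ℝ := fun l => 2 * (A.mulVec (θ i + ∑ j, lam j • θ j) l - b l)
    HasDerivAt (fun t => Φ (Function.update θ i (Function.update (θ i) k t)))
      (lam i * g k) (θ i k) :=
  potential_partial_deriv_general n d A hA b lam θ i k
end

section
/- Let θ ∈ Δ_d with all θ_k > 0, g ∈ ℝᵈ, ḡ = Σ_l θ_l g_l, η > 0 with η·max_k|ḡ − g_k| ≤ 1, and ξ_k = θ_k(ḡ − g_k). Define θ'_k = θ_k·exp(η(ḡ − g_k)) / Σ_l θ_l·exp(η(ḡ − g_l)). Then for every k, |θ'_k − θ_k − η·ξ_k| ≤ e·η²·Σ_l θ_l(ḡ − g_l)², using Σ_l θ_l = 1, Σ_l ξ_l = 0, and the bound 1+x ≤ eˣ ≤ 1+x+(e/2)x² for x ≤ 1. -/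
/-! With `x_l = η (ḡ - g_l)` the update is `θ'_k = θ_k e^{x_k} / S`, where `S = Σ_l θ_l e^{x_l}` and
`Σ_l θ_l x_l = 0`. Writing `e^{x_k} = 1 + x_k + a` with `0 ≤ a ≤ x_k²`, the error is
`θ_k (a - (1 + x_k)(S - 1)) / S`. From `1 + x ≤ eˣ ≤ 1 + x + x²` one gets `1 ≤ S ≤ 1 + V`
with `V = Σ_l θ_l x_l²`, so both `θ_k a` and `θ_k (1 + x_k)(S - 1)` lie in `[0, 2V]`, and their
difference is at most `2V ≤ e V`. -/

open Finset Real

section ExpWeights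

variable {ι : Type*} [Fintype ι] {w x : ι → ℝ}

lemma one_le_sum_mul_exp (hw : w ∈ stdSimplex ℝ ι) (hx : ∑ l, w l * x l = 0) :
    1 ≤ ∑ l, w l * exp (x l) :=
  calc 1 = ∑ l, w l * (x l + 1) := by
          simp only [mul_add, mul_one, sum_add_distrib, hx, hw.2, zero_add]
    _ ≤ ∑ l, w l * exp (x l) :=
          sum_le_sum fun l _ => mul_le_mul_of_nonneg_left (add_one_le_exp _) (hw.1 l)

lemma sum_mul_exp_le_one_add_sum_mul_sq (hw : w ∈ stdSimplex ℝ ι) (hx : ∑ l, w l * x l = 0)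
    (hx1 : ∀ l, |x l| ≤ 1) :
    ∑ l, w l * exp (x l) ≤ 1 + ∑ l, w l * x l ^ 2 :=
  calc ∑ l, w l * exp (x l) ≤ ∑ l, w l * (1 + x l + x l ^ 2) :=
          sum_le_sum fun l _ => mul_le_mul_of_nonneg_left
            (by linarith [(abs_le.mp (abs_exp_sub_one_sub_id_le (hx1 l))).2]) (hw.1 l)
    _ = 1 + ∑ l, w l * x l ^ 2 := by
          simp only [mul_add, mul_one, sum_add_distrib, hx, hw.2, add_zero]

lemma abs_mul_exp_div_sum_mul_exp_sub_le (hw : w ∈ stdSimplex ℝ ι)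
    (hx : ∑ l, w l * x l = 0) (hx1 : ∀ l, |x l| ≤ 1) (k : ι) :
    |w k * exp (x k) / ∑ l, w l * exp (x l) - w k - w k * x k| ≤ 2 * ∑ l, w l * x l ^ 2 := by
  set S := ∑ l, w l * exp (x l)
  set V := ∑ l, w l * x l ^ 2
  set a := exp (x k) - 1 - x k
  set b := (1 + x k) * (S - 1)
  have hS : 1 ≤ S := one_le_sum_mul_exp hw hx
  have hSV : S ≤ 1 + V := sum_mul_exp_le_one_add_sum_mul_sq hw hx hx1
  have hwk : 0 ≤ w k := hw.1 k
  have hwk1 : w k ≤ 1 := hw.2 ▸ single_le_sum (fun l _ => hw.1 l) (mem_univ k)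
  have hwkV : w k * x k ^ 2 ≤ V :=
    single_le_sum (f := fun l => w l * x l ^ 2) (fun l _ => mul_nonneg (hw.1 l) (sq_nonneg _))
      (mem_univ k)
  have hxk := abs_le.mp (hx1 k)
  have ha0 : 0 ≤ a := by linarith [add_one_le_exp (x k)]
  have ha : a ≤ x k ^ 2 := (abs_le.mp (abs_exp_sub_one_sub_id_le (hx1 k))).2
  have hb0 : 0 ≤ b := mul_nonneg (by linarith) (by linarith)
  have hb : b ≤ 2 * V := mul_le_mul (by linarith) (by linarith) (by linarith) (by norm_num)
  have herr : w k * exp (x k) / S - w k - w k * x k = (w k * a - w k * b) / S := by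
    field_simp
    ring
  calc |w k * exp (x k) / S - w k - w k * x k| = |w k * a - w k * b| / S := by
        rw [herr, abs_div, abs_of_pos (zero_lt_one.trans_le hS)]
    _ ≤ |w k * a - w k * b| := div_le_self (abs_nonneg _) hS
    _ ≤ 2 * V := abs_sub_le_of_nonneg_of_le (mul_nonneg hwk ha0) (by nlinarith)
          (mul_nonneg hwk hb0) (by nlinarith)

end ExpWeights

theorem exp_gradient_step_approximation_general (d : ℕ) (θ : Fin d → ℝ)
    (hθ : θ ∈ stdSimplex ℝ (Fin d))
    (g : Fin d → ℝ) (η : ℝ) (hη : 0 < η) :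
    let gbar : ℝ := ∑ l, θ l * g l
    let ξ : Fin d → ℝ := fun k => θ k * (gbar - g k)
    let θ' : Fin d → ℝ := fun k =>
      θ k * Real.exp (η * (gbar - g k)) / ∑ l, θ l * Real.exp (η * (gbar - g l))
    (∀ k, η * |gbar - g k| ≤ 1) →
      ∀ k, |θ' k - θ k - η * ξ k| ≤
        Real.exp 1 * η ^ 2 * ∑ l, θ l * (gbar - g l) ^ 2 := by
  intro gbar ξ θ' hbound k
  set x : Fin d → ℝ := fun l => η * (gbar - g l)
  have hx1 : ∀ l, |x l| ≤ 1 := fun l => by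
    simpa only [x, abs_mul, abs_of_pos hη] using hbound l
  have hx : ∑ l, θ l * x l = 0 := by
    simp only [x, mul_sub, mul_left_comm (θ _), sum_sub_distrib, ← mul_sum, ← sum_mul, hθ.2]
    ring
  have hV : ∑ l, θ l * x l ^ 2 = η ^ 2 * ∑ l, θ l * (gbar - g l) ^ 2 := by
    simp only [x, mul_sum]
    exact sum_congr rfl fun l _ => by ring
  have hξ : η * ξ k = θ k * x k := by simp only [ξ, x]; ring
  have he : (2 : ℝ) ≤ exp 1 := by linarith [add_one_le_exp (1 : ℝ)]
  calc |θ' k - θ k - η * ξ k| = |θ k * exp (x k) / ∑ l, θ l * exp (x l) - θ k - θ k * x k| := by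
        rw [hξ]
    _ ≤ 2 * ∑ l, θ l * x l ^ 2 := abs_mul_exp_div_sum_mul_exp_sub_le hθ hx hx1 k
    _ ≤ exp 1 * η ^ 2 * ∑ l, θ l * (gbar - g l) ^ 2 := by
        rw [hV, mul_assoc]
        exact mul_le_mul_of_nonneg_right he
          (mul_nonneg (sq_nonneg η) (sum_nonneg fun l _ => mul_nonneg (hθ.1 l) (sq_nonneg _)))

theorem exp_gradient_step_approximation (d : ℕ) (θ : Fin d → ℝ)
    (hθ : θ ∈ stdSimplex ℝ (Fin d)) (hpos : ∀ k, 0 < θ k)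
    (g : Fin d → ℝ) (η : ℝ) (hη : 0 < η) :
    let gbar : ℝ := ∑ l, θ l * g l
    let ξ : Fin d → ℝ := fun k => θ k * (gbar - g k)
    let θ' : Fin d → ℝ := fun k =>
      θ k * Real.exp (η * (gbar - g k)) / ∑ l, θ l * Real.exp (η * (gbar - g l))
    (∀ k, η * |gbar - g k| ≤ 1) →
      ∀ k, |θ' k - θ k - η * ξ k| ≤
        Real.exp 1 * η ^ 2 * ∑ l, θ l * (gbar - g l) ^ 2 :=
  exp_gradient_step_approximation_general d θ hθ g η hη
end

section
/- Let f: [0,1] → [0,1] be continuous and suppose there exist points x₀, x₁, x₂, x₃ ∈ [0,1] with f(x₀) = x₁, f(x₁) = x₂, f(x₂) = x₃ and x₃ ≤ x₀ < x₁ (equivalently f³(x₀) ≤ x₀ < f(x₀)). Then f has a periodic point of period 3, and hence periodic points of every period n ≥ 1. -/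
/-!
In each of the three possible orderings of `x₀, x₁, x₂`, two of the points cut out closed
intervals `L` and `S` meeting in one point `P`, with `f(L) ⊇ L ∪ S` and `f(S) ⊇ L`. Following
the itinerary `L, …, L, S` of length `n` back through these coverings gives a nonempty interval
`Q ⊆ L` with `f^[n](Q) = L`, hence a fixed point `x` of `f^[n]` in `Q`. If its minimal period
were a proper divisor of `n`, the whole orbit of `x` would lie in `L`, forcing `f^[n-1] x = P`
and so `x = f P`; but the orbit of `P` leaves `L` within two steps.
-/

open Set Function

theorem mem_uIcc_or_mem_uIcc_of_notMem_uIcc {α : Type*} [LinearOrder α] {w y z : α}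
    (h : w ∉ uIcc y z) : y ∈ uIcc w z ∨ z ∈ uIcc y w := by
  simp only [mem_uIcc] at *
  grind

theorem exists_isFixedPt_of_Icc_subset_image {g : ℝ → ℝ} {p q : ℝ} (hpq : p ≤ q)
    (hg : ContinuousOn g (Icc p q)) (h : Icc p q ⊆ g '' Icc p q) :
    ∃ x ∈ Icc p q, IsFixedPt g x := by
  obtain ⟨u, hu, hgu⟩ := h (left_mem_Icc.2 hpq)
  obtain ⟨v, hv, hgv⟩ := h (right_mem_Icc.2 hpq)
  exact isPreconnected_Icc.intermediate_value₂ hu hv hg continuousOn_id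
    (hgu.trans_le hu.1) (hv.2.trans_eq hgv.symm)

/-- Take `q` the first point after `u` where `f` takes the value `f v`, and `p` the last point
before `q` where it takes the value `f u`; in between, `f` cannot cross either value again. -/
theorem exists_Icc_subset_image_eq_uIcc {f : ℝ → ℝ} {u v : ℝ} (huv : u ≤ v)
    (hf : ContinuousOn f (Icc u v)) :
    ∃ p q, p ≤ q ∧ Icc p q ⊆ Icc u v ∧ f '' Icc p q = uIcc (f u) (f v) := by
  have level_compact : ∀ {r s : ℝ} (y : ℝ), Icc r s ⊆ Icc u v →
      IsCompact (Icc r s ∩ f ⁻¹' {y}) := fun y hrs =>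
    isCompact_Icc.of_isClosed_subset
      ((hf.mono hrs).preimage_isClosed_of_isClosed isClosed_Icc isClosed_singleton)
      inter_subset_left
  obtain ⟨q, ⟨⟨huq, hqv⟩, hfq⟩, hq_least⟩ :=
    (level_compact (f v) subset_rfl).exists_isLeast ⟨v, right_mem_Icc.2 huv, rfl⟩
  obtain ⟨p, ⟨⟨hup, hpq⟩, hfp⟩, hp_greatest⟩ :=
    (level_compact (f u) (Icc_subset_Icc_right hqv)).exists_isGreatest
      ⟨u, left_mem_Icc.2 huq, rfl⟩
  have hfp : f p = f u := hfp
  have hfq : f q = f v := hfq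
  have hsub : Icc p q ⊆ Icc u v := Icc_subset_Icc hup hqv
  have hcont : ∀ {r s : ℝ}, r ∈ Icc p q → s ∈ Icc p q → ContinuousOn f (uIcc r s) :=
    fun hr hs => hf.mono ((ordConnected_Icc.uIcc_subset hr hs).trans hsub)
  refine ⟨p, q, hpq, hsub, Subset.antisymm ?_ ?_⟩
  · rintro _ ⟨t, ht, rfl⟩
    by_contra hout
    rcases mem_uIcc_or_mem_uIcc_of_notMem_uIcc hout with hu | hv
    · obtain ⟨s, hs, hfs⟩ := intermediate_value_uIcc (hcont ht (right_mem_Icc.2 hpq))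
        (hfq ▸ hu)
      rw [uIcc_of_le ht.2] at hs
      have hsp : s ≤ p := hp_greatest ⟨⟨hup.trans (ht.1.trans hs.1), hs.2⟩, hfs⟩
      obtain rfl : s = t := le_antisymm (hsp.trans ht.1) hs.1
      exact hout (hfs ▸ left_mem_uIcc)
    · obtain ⟨s, hs, hfs⟩ := intermediate_value_uIcc (hcont (left_mem_Icc.2 hpq) ht)
        (hfp ▸ hv)
      rw [uIcc_of_le ht.1] at hs
      have hqs : q ≤ s := hq_least ⟨hsub ⟨hs.1, hs.2.trans ht.2⟩, hfs⟩
      obtain rfl : s = t := le_antisymm hs.2 (ht.2.trans hqs)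
      exact hout (hfs ▸ right_mem_uIcc)
  · rw [← hfp, ← hfq, ← uIcc_of_le hpq]
    exact intermediate_value_uIcc (hcont (left_mem_Icc.2 hpq) (right_mem_Icc.2 hpq))

theorem exists_Icc_subset_image_eq_of_subset_image {f : ℝ → ℝ} {a b c d : ℝ}
    (hf : ContinuousOn f (Icc a b)) (hcd : c ≤ d) (h : Icc c d ⊆ f '' Icc a b) :
    ∃ p q, p ≤ q ∧ Icc p q ⊆ Icc a b ∧ f '' Icc p q = Icc c d := by
  obtain ⟨u, hu, rfl⟩ := h (left_mem_Icc.2 hcd)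
  obtain ⟨v, hv, rfl⟩ := h (right_mem_Icc.2 hcd)
  rcases le_total u v with huv | hvu
  · obtain ⟨p, q, hpq, hsub, himg⟩ :=
      exists_Icc_subset_image_eq_uIcc huv (hf.mono (ordConnected_Icc.out hu hv))
    exact ⟨p, q, hpq, hsub.trans (ordConnected_Icc.out hu hv), by rw [himg, uIcc_of_le hcd]⟩
  · obtain ⟨p, q, hpq, hsub, himg⟩ :=
      exists_Icc_subset_image_eq_uIcc hvu (hf.mono (ordConnected_Icc.out hv hu))
    exact ⟨p, q, hpq, hsub.trans (ordConnected_Icc.out hv hu), by rw [himg, uIcc_of_ge hcd]⟩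

theorem exists_Icc_iterate_image_eq {f : ℝ → ℝ} {K : ℕ → Set ℝ}
    (hK : ∀ i, ∃ a b, a ≤ b ∧ K i = Icc a b) (hf : ∀ i, ContinuousOn f (K i))
    (hcov : ∀ i, K (i + 1) ⊆ f '' K i) (n : ℕ) :
    ∃ p q, p ≤ q ∧ Icc p q ⊆ K 0 ∧ (∀ i ≤ n, MapsTo f^[i] (Icc p q) (K i)) ∧
      ContinuousOn f^[n] (Icc p q) ∧ f^[n] '' Icc p q = K n := by
  induction n generalizing K with
  | zero =>
    obtain ⟨a, b, hab, hK0⟩ := hK 0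
    refine ⟨a, b, hab, hK0.ge, fun i hi => ?_, continuousOn_id,
      by rw [iterate_zero, image_id, hK0]⟩
    obtain rfl : i = 0 := Nat.le_zero.mp hi
    exact hK0 ▸ mapsTo_id _
  | succ n ih =>
    obtain ⟨p', q', hpq', hQ', hmaps', hcont', himg'⟩ :=
      ih (K := fun i => K (i + 1)) (fun i => hK _) (fun i => hf _) (fun i => hcov _)
    obtain ⟨a, b, -, hK0⟩ := hK 0
    obtain ⟨p, q, hpq, hQ, himg⟩ := exists_Icc_subset_image_eq_of_subset_image
      (hK0 ▸ hf 0) hpq' (hK0 ▸ hQ'.trans (hcov 0))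
    have hmapsQ : MapsTo f (Icc p q) (Icc p' q') := himg ▸ mapsTo_image f _
    refine ⟨p, q, hpq, hK0 ▸ hQ, fun i hi => ?_, ?_, ?_⟩
    · cases i with
      | zero => exact hK0 ▸ hQ
      | succ i => exact iterate_succ f i ▸ (hmaps' i (by omega)).comp hmapsQ
    · exact iterate_succ f n ▸ hcont'.comp ((hf 0).mono (hK0 ▸ hQ)) hmapsQ
    · rw [iterate_succ, image_comp, himg, himg']

theorem Function.IsPeriodicPt.minimalPeriod_eq_of_itinerary {α : Type*} {f : α → α}
    {L S : Set α} {P x : α} {n : ℕ} (hn : 0 < n) (hx : IsPeriodicPt f n x)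
    (hxL : ∀ i < n - 1, f^[i] x ∈ L) (hxS : f^[n - 1] x ∈ S) (hinter : L ∩ S ⊆ {P})
    (hP : f P ∈ L → f (f P) ∉ L) : minimalPeriod f x = n := by
  by_contra hne
  have hd : minimalPeriod f x < n := (Nat.le_of_dvd hn hx.minimalPeriod_dvd).lt_of_ne hne
  have horbit : ∀ i, f^[i] x ∈ L := fun i => by
    have := Nat.mod_lt i (hx.minimalPeriod_pos hn)
    rw [← iterate_mod_minimalPeriod_eq]
    exact hxL _ (by omega)
  have hxP : f P = x := by
    rw [← hinter ⟨horbit (n - 1), hxS⟩, ← iterate_succ_apply' f, Nat.succ_eq_add_one,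
      Nat.sub_add_cancel hn]
    exact hx
  exact hP (hxP ▸ horbit 0) (hxP ▸ horbit 1)

theorem exists_minimalPeriod_eq_of_horseshoe {f : ℝ → ℝ} {L S : Set ℝ} {P : ℝ}
    (hL : ∃ a b, a ≤ b ∧ L = Icc a b) (hS : ∃ a b, a ≤ b ∧ S = Icc a b)
    (hfL : ContinuousOn f L) (hfS : ContinuousOn f S)
    (hLL : L ⊆ f '' L) (hSL : S ⊆ f '' L) (hLS : L ⊆ f '' S) (hinter : L ∩ S ⊆ {P})
    (hP : f P ∈ L → f (f P) ∉ L) {n : ℕ} (hn : 1 ≤ n) :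
    ∃ x ∈ L, minimalPeriod f x = n := by
  obtain rfl | hn := hn.eq_or_lt
  · obtain ⟨a, b, hab, rfl⟩ := hL
    obtain ⟨x, hx, hfix⟩ := exists_isFixedPt_of_Icc_subset_image hab hfL hLL
    exact ⟨x, hx, minimalPeriod_eq_one_iff_isFixedPt.2 hfix⟩
  set K : ℕ → Set ℝ := fun i => if i = n - 1 then S else L
  have hKL : ∀ i, i ≠ n - 1 → K i = L := fun i hi => if_neg hi
  have hKS : K (n - 1) = S := if_pos rfl
  have hKLS : ∀ i, K i = L ∨ K i = S := fun i => by
    by_cases hi : i = n - 1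
    · exact .inr (hi ▸ hKS)
    · exact .inl (hKL i hi)
  obtain ⟨p, q, hpq, hQ0, hmaps, hcont, himg⟩ := exists_Icc_iterate_image_eq (K := K)
    (fun i => by rcases hKLS i with h | h <;> rw [h] <;> assumption)
    (fun i => by rcases hKLS i with h | h <;> rw [h] <;> assumption)
    (fun i => by
      by_cases hi : i = n - 1
      · rw [hKL (i + 1) (by omega), hi, hKS]
        exact hLS
      · rw [hKL i hi]
        rcases hKLS (i + 1) with h | h <;> rw [h] <;> assumption)
    n
  rw [hKL 0 (by omega)] at hQ0
  rw [hKL n (by omega)] at himg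
  obtain ⟨x, hxQ, hfix⟩ := exists_isFixedPt_of_Icc_subset_image hpq hcont (himg ▸ hQ0)
  refine ⟨x, hQ0 hxQ, IsPeriodicPt.minimalPeriod_eq_of_itinerary (by omega) hfix
    (fun i hi => hKL i (by omega) ▸ hmaps i (by omega) hxQ)
    (hKS ▸ hmaps (n - 1) (by omega) hxQ) hinter hP⟩

theorem exists_minimalPeriod_eq_of_map_le_of_le_map_of_map_le {f : ℝ → ℝ} {a b c : ℝ}
    (hf : ContinuousOn f (Icc a c)) (hab : a < b) (hbc : b ≤ c)
    (ha : f a ≤ b) (hb : c ≤ f b) (hc : f c ≤ a) {n : ℕ} (hn : 1 ≤ n) :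
    ∃ x ∈ Icc a c, minimalPeriod f x = n := by
  have hfL : ContinuousOn f (Icc b c) := hf.mono (Icc_subset_Icc_left hab.le)
  have hfS : ContinuousOn f (Icc a b) := hf.mono (Icc_subset_Icc_right hbc)
  have himgL : Icc (f c) (f b) ⊆ f '' Icc b c := intermediate_value_Icc' hbc hfL
  obtain ⟨x, hx, hxn⟩ := exists_minimalPeriod_eq_of_horseshoe (P := b)
    ⟨b, c, hbc, rfl⟩ ⟨a, b, hab.le, rfl⟩ hfL hfS
    ((Icc_subset_Icc (hc.trans hab.le) hb).trans himgL)
    ((Icc_subset_Icc hc (hbc.trans hb)).trans himgL)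
    ((Icc_subset_Icc ha hb).trans (intermediate_value_Icc hab.le hfS))
    (by rw [inter_comm, Icc_inter_Icc_eq_singleton hab.le hbc])
    (fun hfb hffb => by
      rw [le_antisymm hfb.2 hb] at hffb
      exact (hc.trans_lt hab).not_ge hffb.1)
    hn
  exact ⟨x, Icc_subset_Icc_left hab.le hx, hxn⟩

theorem exists_minimalPeriod_eq_of_le_map_of_map_le_of_le_map {f : ℝ → ℝ} {a b c : ℝ}
    (hf : ContinuousOn f (Icc a c)) (hab : a ≤ b) (hbc : b < c)
    (ha : c ≤ f a) (hb : f b ≤ a) (hc : b ≤ f c) {n : ℕ} (hn : 1 ≤ n) :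
    ∃ x ∈ Icc a c, minimalPeriod f x = n := by
  have hfL : ContinuousOn f (Icc a b) := hf.mono (Icc_subset_Icc_right hbc.le)
  have hfS : ContinuousOn f (Icc b c) := hf.mono (Icc_subset_Icc_left hab)
  have himgL : Icc (f b) (f a) ⊆ f '' Icc a b := intermediate_value_Icc' hab hfL
  obtain ⟨x, hx, hxn⟩ := exists_minimalPeriod_eq_of_horseshoe (P := b)
    ⟨a, b, hab, rfl⟩ ⟨b, c, hbc.le, rfl⟩ hfL hfS
    ((Icc_subset_Icc hb (hbc.le.trans ha)).trans himgL)
    ((Icc_subset_Icc (hb.trans hab) ha).trans himgL)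
    ((Icc_subset_Icc hb hc).trans (intermediate_value_Icc hbc.le hfS))
    (Icc_inter_Icc_eq_singleton hab hbc.le).subset
    (fun hfb hffb => by
      rw [le_antisymm hb hfb.1] at hffb
      exact (hbc.trans_le ha).not_ge hffb.2)
    hn
  exact ⟨x, Icc_subset_Icc_right hbc.le hx, hxn⟩

theorem li_yorke_period_three_criterion_general (f : ℝ → ℝ)
    (hcont : ContinuousOn f (Set.Icc (0:ℝ) 1))
    (x0 x1 x2 x3 : ℝ) (hx0 : x0 ∈ Set.Icc (0:ℝ) 1) (hx1 : x1 ∈ Set.Icc (0:ℝ) 1)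
    (hx2 : x2 ∈ Set.Icc (0:ℝ) 1)
    (h01 : f x0 = x1) (h12 : f x1 = x2) (h23 : f x2 = x3)
    (h30 : x3 ≤ x0) (h0lt1 : x0 < x1) :
    (∃ p ∈ Set.Icc (0:ℝ) 1, Function.minimalPeriod f p = 3) ∧
      ∀ m : ℕ, 1 ≤ m → ∃ q ∈ Set.Icc (0:ℝ) 1, Function.minimalPeriod f q = m := by
  have hx12 : x1 ≠ x2 := by rintro rfl; linarith [h12.symm.trans h23]
  have hx02 : x0 ≠ x2 := by rintro rfl; linarith [h01.symm.trans h23]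
  have hsub : ∀ {a c : ℝ}, a ∈ Icc (0 : ℝ) 1 → c ∈ Icc (0 : ℝ) 1 → Icc a c ⊆ Icc 0 1 :=
    fun ha hc => ordConnected_Icc.out ha hc
  suffices h : ∀ m : ℕ, 1 ≤ m → ∃ q ∈ Icc (0 : ℝ) 1, minimalPeriod f q = m from
    ⟨h 3 (by norm_num), h⟩
  intro m hm
  rcases hx12.lt_or_gt with h1lt2 | h2lt1
  · obtain ⟨x, hx, hxm⟩ := exists_minimalPeriod_eq_of_map_le_of_le_map_of_map_le
      (hcont.mono (hsub hx0 hx2)) h0lt1 h1lt2.le h01.le h12.ge (h23.trans_le h30) hm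
    exact ⟨x, hsub hx0 hx2 hx, hxm⟩
  rcases hx02.lt_or_gt with h0lt2 | h2lt0
  · obtain ⟨x, hx, hxm⟩ := exists_minimalPeriod_eq_of_le_map_of_map_le_of_le_map
      (hcont.mono (hsub hx0 hx1)) h0lt2.le h2lt1 h01.ge (h23.trans_le h30) h12.ge hm
    exact ⟨x, hsub hx0 hx1 hx, hxm⟩
  · obtain ⟨x, hx, hxm⟩ := exists_minimalPeriod_eq_of_map_le_of_le_map_of_map_le
      (hcont.mono (hsub hx2 hx1)) h2lt0 h0lt1.le (h23.trans_le h30) h01.ge h12.le hm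
    exact ⟨x, hsub hx2 hx1 hx, hxm⟩

theorem li_yorke_period_three_criterion (f : ℝ → ℝ)
    (hmaps : Set.MapsTo f (Set.Icc (0:ℝ) 1) (Set.Icc (0:ℝ) 1))
    (hcont : ContinuousOn f (Set.Icc (0:ℝ) 1))
    (x0 x1 x2 x3 : ℝ) (hx0 : x0 ∈ Set.Icc (0:ℝ) 1) (hx1 : x1 ∈ Set.Icc (0:ℝ) 1)
    (hx2 : x2 ∈ Set.Icc (0:ℝ) 1) (hx3 : x3 ∈ Set.Icc (0:ℝ) 1)
    (h01 : f x0 = x1) (h12 : f x1 = x2) (h23 : f x2 = x3)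
    (h30 : x3 ≤ x0) (h0lt1 : x0 < x1) :
    (∃ p ∈ Set.Icc (0:ℝ) 1, Function.minimalPeriod f p = 3) ∧
      ∀ m : ℕ, 1 ≤ m → ∃ q ∈ Set.Icc (0:ℝ) 1, Function.minimalPeriod f q = m :=
  li_yorke_period_three_criterion_general f hcont x0 x1 x2 x3 hx0 hx1 hx2 h01 h12 h23 h30 h0lt1
end

section
/- Fix β∞ ∈ (0, 1/2), constants c₁, c₂ > 0, and define for L > 0: α(L) = c₁(1+L) and β(L) = β∞ + δ(L) where δ(L) → 0 as L → ∞ and β(L) ∈ (2β∞/3, 4β∞/3) for large L. Let f_L(x) = x/(x + (1−x)exp(α(L)(x−β(L)))), y(L) = β(L)/2, and x₁(L) = 1 − 1/α(L). Then for all sufficiently large L: f_L(y(L)) > x₁(L). -/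
/-!
At `y = β/2` the exponent is `α (y - β) = -α β / 2`, and `β / 2 > β∞ / 3` eventually, so the
inequality `f(y) > 1 - 1/α` reduces to `(α - 1) (1 - y) e^{-αβ/2} < y`. Its left side is at most
`α e^{-α β∞ / 3}`, which tends to `0` as `α → ∞`, while `y > β∞ / 3`.
-/

open Filter Real

lemma one_sub_inv_lt_div_of_mul_lt {a x E : ℝ} (ha : 0 < a) (hx : x < 1) (hE : 0 < E)
    (h : (a - 1) * ((1 - x) * E) < x) : 1 - 1 / a < x / (x + (1 - x) * E) := by
  have hden : 0 < x + (1 - x) * E := by nlinarith [mul_pos (sub_pos.2 hx) hE]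
  rw [one_sub_div ha.ne', div_lt_div_iff₀ ha hden]
  nlinarith

lemma eventually_mul_exp_neg_mul_lt {ι : Type*} {l : Filter ι} {α : ι → ℝ}
    (hα : Tendsto α l atTop) {c : ℝ} (hc : 0 < c) :
    ∀ᶠ i in l, α i * exp (-(α i * c)) < c := by
  have hlim := (tendsto_rpow_mul_exp_neg_mul_atTop_nhds_zero 1 c hc).comp hα
  filter_upwards [hlim.eventually_lt_const hc] with i hi
  simpa [mul_comm c] using hi

lemma one_sub_inv_lt_half_div {a b c : ℝ} (ha : 1 ≤ a) (hb : b < 2) (hcb : c < b / 2)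
    (hsmall : a * exp (-(a * c)) < c) :
    1 - 1 / a < b / 2 / (b / 2 + (1 - b / 2) * exp (a * (b / 2 - b))) := by
  refine one_sub_inv_lt_div_of_mul_lt (by linarith) (by linarith) (exp_pos _) ?_
  have hexp : exp (a * (b / 2 - b)) ≤ exp (-(a * c)) := exp_le_exp.2 (by nlinarith)
  have hc : 0 < c := (mul_pos (by linarith) (exp_pos _)).trans hsmall
  have hfactor : (a - 1) * (1 - b / 2) ≤ a := by nlinarith
  calc (a - 1) * ((1 - b / 2) * exp (a * (b / 2 - b)))
      = (a - 1) * (1 - b / 2) * exp (a * (b / 2 - b)) := by ring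
    _ ≤ a * exp (-(a * c)) := mul_le_mul hfactor hexp (exp_pos _).le (by linarith)
    _ < b / 2 := by linarith

theorem period_three_first_inequality_general (binf c1 : ℝ)
    (hbinf : binf ∈ Set.Ioo (0:ℝ) (1/2)) (hc1 : 0 < c1)
    (δ : ℝ → ℝ) :
    let β : ℝ → ℝ := fun L => binf + δ L
    let α : ℝ → ℝ := fun L => c1 * (1 + L)
    let f : ℝ → ℝ → ℝ := fun L x =>
      x / (x + (1 - x) * Real.exp (α L * (x - β L)))
    (∀ᶠ L in atTop, β L ∈ Set.Ioo (2 * binf / 3) (4 * binf / 3)) →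
      ∀ᶠ L in atTop, f L (β L / 2) > 1 - 1 / α L := by
  intro β α f hβ
  obtain ⟨hbinf0, hbinf1⟩ := hbinf
  have hα : Tendsto α atTop atTop :=
    (tendsto_atTop_add_const_left atTop 1 tendsto_id).const_mul_atTop hc1
  filter_upwards [hβ, hα.eventually_ge_atTop 1,
    eventually_mul_exp_neg_mul_lt hα (by linarith : 0 < binf / 3)] with L ⟨hlo, hhi⟩ hα1 hsmall
  exact one_sub_inv_lt_half_div hα1 (by linarith) (by linarith) hsmall

theorem period_three_first_inequality (binf c1 : ℝ)
    (hbinf : binf ∈ Set.Ioo (0:ℝ) (1/2)) (hc1 : 0 < c1)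
    (δ : ℝ → ℝ) (hδ : Tendsto δ atTop (nhds 0)) :
    let β : ℝ → ℝ := fun L => binf + δ L
    let α : ℝ → ℝ := fun L => c1 * (1 + L)
    let f : ℝ → ℝ → ℝ := fun L x =>
      x / (x + (1 - x) * Real.exp (α L * (x - β L)))
    (∀ᶠ L in atTop, β L ∈ Set.Ioo (2 * binf / 3) (4 * binf / 3)) →
      ∀ᶠ L in atTop, f L (β L / 2) > 1 - 1 / α L :=
  period_three_first_inequality_general binf c1 hbinf hc1 δ
end

section
/- With α(L) = c₁(1+L), c₁ > 0, and β(L) → β∞ ∈ (0, 1/2), let f_L(x) = x/(x + (1−x)exp(α(L)(x−β(L)))), x₁ = 1 − 1/α(L), x₂ = f_L(x₁), x₃ = f_L(x₂). Then x₂ ≤ α(L)·exp(−α(L)(3/4 − β(L)/2)) and x₃ ≤ α(L)·exp((3α(L)/2)(β(L) − 1/2)); consequently x₃ → 0 as L → ∞. -/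
/-!
Because `1 - x₁ = 1 / α`, one step of the map sends `x₁` to at most `α · exp (-α (x₁ - β))`, and
`x₁ ≥ 3/4 + β/2` as soon as `α (1 - 2β) ≥ 4`. On `[0, 1]` the map is at most `x · exp (α β)`, so
`x₃ ≤ x₂ · exp (α β)`, whose exponent `-(3α/4)(1 - 2β)` tends to `-∞` linearly in `α` and beats the
prefactor `α`.
-/

open Filter Real Set Topology

/-- The paper's `f_L` with `a = α(L)`, `b = β(L)`; it multiplies the odds `x / (1 - x)` by
`exp (-a * (x - b))`. -/
noncomputable def oddsMap (a b x : ℝ) : ℝ :=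
  x / (x + (1 - x) * exp (a * (x - b)))

section oddsMap

variable {a b x : ℝ}

lemma oddsMap_denom_pos (hx : x ∈ Icc 0 1) : 0 < x + (1 - x) * exp (a * (x - b)) := by
  rcases hx.1.eq_or_lt with rfl | hx0
  · simpa using exp_pos _
  · exact add_pos_of_pos_of_nonneg hx0 (mul_nonneg (sub_nonneg.2 hx.2) (exp_pos _).le)

lemma oddsMap_mem_Icc (hx : x ∈ Icc 0 1) : oddsMap a b x ∈ Icc 0 1 :=
  ⟨div_nonneg hx.1 (oddsMap_denom_pos hx).le,
    div_le_one_of_le₀ (le_add_of_nonneg_right (mul_nonneg (sub_nonneg.2 hx.2) (exp_pos _).le))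
      (oddsMap_denom_pos hx).le⟩

/-- The denominator is a convex combination of `1` and `exp (a * (x - b))`, both at least
`exp (-(a * b))`. -/
lemma oddsMap_le_mul_exp (ha : 0 ≤ a) (hb : 0 ≤ b) (hx : x ∈ Icc 0 1) :
    oddsMap a b x ≤ x * exp (a * b) := by
  have hlow : exp (-(a * b)) ≤ exp (a * (x - b)) :=
    exp_le_exp.2 (by nlinarith [mul_nonneg ha hx.1])
  have hone : exp (-(a * b)) ≤ 1 := exp_le_one_iff.2 (by nlinarith)
  have hdenom : exp (-(a * b)) ≤ x + (1 - x) * exp (a * (x - b)) := by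
    nlinarith [mul_le_mul_of_nonneg_left hlow (sub_nonneg.2 hx.2),
      mul_le_mul_of_nonneg_left hone hx.1]
  calc oddsMap a b x ≤ x / exp (-(a * b)) := div_le_div_of_nonneg_left hx.1 (exp_pos _) hdenom
    _ = x * exp (a * b) := by rw [exp_neg, div_inv_eq_mul]

lemma oddsMap_le_div (hx : x ∈ Ico 0 1) :
    oddsMap a b x ≤ x / ((1 - x) * exp (a * (x - b))) :=
  div_le_div_of_nonneg_left hx.1 (mul_pos (sub_pos.2 hx.2) (exp_pos _))
    (le_add_of_nonneg_left hx.1)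

lemma one_sub_one_div_mem_Icc (ha : 1 ≤ a) : 1 - 1 / a ∈ Icc 0 1 := by
  have : 0 < 1 / a := by positivity
  exact ⟨by rw [sub_nonneg, div_le_one₀ (by linarith)]; exact ha, by linarith⟩

lemma oddsMap_one_sub_one_div_le (hb : 0 ≤ b) (ha : 0 < a) (hab : 4 ≤ a * (1 - 2 * b)) :
    oddsMap a b (1 - 1 / a) ≤ a * exp (-a * (3 / 4 - b / 2)) := by
  have ha4 : 4 ≤ a := by nlinarith
  have hx1 : 3 / 4 + b / 2 ≤ 1 - 1 / a := by
    have : 1 / a ≤ (1 - 2 * b) / 4 := by rw [div_le_div_iff₀ ha (by norm_num)]; linarith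
    linarith
  calc oddsMap a b (1 - 1 / a)
      ≤ (1 - 1 / a) / ((1 - (1 - 1 / a)) * exp (a * (1 - 1 / a - b))) :=
        oddsMap_le_div ⟨(one_sub_one_div_mem_Icc (by linarith)).1, by simp [ha]⟩
    _ = (a - 1) * exp (-a * (1 - 1 / a - b)) := by
        rw [neg_mul, exp_neg]; field_simp; ring
    _ ≤ a * exp (-a * (3 / 4 - b / 2)) := by
        refine mul_le_mul (by linarith) (exp_le_exp.2 ?_) (exp_pos _).le ha.le
        nlinarith [mul_le_mul_of_nonneg_left hx1 ha.le]

lemma oddsMap_oddsMap_one_sub_one_div_le (hb : 0 ≤ b) (ha : 0 < a) (hab : 4 ≤ a * (1 - 2 * b)) :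
    oddsMap a b (oddsMap a b (1 - 1 / a)) ≤ a * exp ((3 * a / 2) * (b - 1 / 2)) :=
  calc oddsMap a b (oddsMap a b (1 - 1 / a))
      ≤ oddsMap a b (1 - 1 / a) * exp (a * b) :=
        oddsMap_le_mul_exp ha.le hb (oddsMap_mem_Icc (one_sub_one_div_mem_Icc (by nlinarith)))
    _ ≤ a * exp (-a * (3 / 4 - b / 2)) * exp (a * b) :=
        mul_le_mul_of_nonneg_right (oddsMap_one_sub_one_div_le hb ha hab) (exp_pos _).le
    _ = a * exp ((3 * a / 2) * (b - 1 / 2)) := by rw [mul_assoc, ← exp_add]; ring_nf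

end oddsMap

lemma tendsto_mul_exp_mul_nhds_zero {ι : Type*} {l : Filter ι} {a k : ι → ℝ} {k₀ : ℝ}
    (ha : Tendsto a l atTop) (hk : Tendsto k l (𝓝 k₀)) (hk₀ : k₀ < 0) :
    Tendsto (fun i => a i * exp (k i * a i)) l (𝓝 0) := by
  have hu : Tendsto (fun i => a i * -k i) l atTop := ha.atTop_mul_pos (neg_pos.2 hk₀) hk.neg
  have := ((tendsto_pow_mul_exp_neg_atTop_nhds_zero 1).comp hu).mul
    (hk.neg.inv₀ (neg_ne_zero.2 hk₀.ne))
  rw [zero_mul] at this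
  refine this.congr' ?_
  filter_upwards [hk.eventually_lt_const hk₀] with i hi
  simp only [Function.comp_apply, pow_one]
  rw [show -(a i * -k i) = k i * a i by ring]
  field_simp
  exact mul_div_cancel_right₀ _ hi.ne

theorem period_three_decay_bounds (binf c1 : ℝ)
    (hbinf : binf ∈ Set.Ioo (0:ℝ) (1/2)) (hc1 : 0 < c1)
    (β : ℝ → ℝ) (hβ : Tendsto β atTop (nhds binf)) :
    let α : ℝ → ℝ := fun L => c1 * (1 + L)
    let f : ℝ → ℝ → ℝ := fun L x =>
      x / (x + (1 - x) * Real.exp (α L * (x - β L)))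
    let x1 : ℝ → ℝ := fun L => 1 - 1 / α L
    let x2 : ℝ → ℝ := fun L => f L (x1 L)
    let x3 : ℝ → ℝ := fun L => f L (x2 L)
    (∀ᶠ L in atTop,
        x2 L ≤ α L * Real.exp (-(α L) * (3 / 4 - β L / 2)) ∧
        x3 L ≤ α L * Real.exp ((3 * α L / 2) * (β L - 1 / 2))) ∧
      Tendsto x3 atTop (nhds 0) := by
  intro α f x1 x2 x3
  have hα : Tendsto α atTop atTop :=
    (tendsto_atTop_add_const_left atTop 1 tendsto_id).const_mul_atTop hc1
  have hgap : Tendsto (fun L => α L * (1 - 2 * β L)) atTop atTop :=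
    hα.atTop_mul_pos (by linarith [hbinf.2]) (tendsto_const_nhds.sub (hβ.const_mul 2))
  have hbounds : ∀ᶠ L in atTop,
      x2 L ≤ α L * exp (-(α L) * (3 / 4 - β L / 2)) ∧
        x3 L ≤ α L * exp ((3 * α L / 2) * (β L - 1 / 2)) := by
    filter_upwards [hβ.eventually_const_lt hbinf.1, hα.eventually_gt_atTop 0,
      hgap.eventually_ge_atTop 4] with L hβL hαL hgapL
    exact ⟨oddsMap_one_sub_one_div_le hβL.le hαL hgapL,
      oddsMap_oddsMap_one_sub_one_div_le hβL.le hαL hgapL⟩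
  have hx3_nonneg : ∀ᶠ L in atTop, 0 ≤ x3 L := by
    filter_upwards [hα.eventually_ge_atTop 1] with L hαL
    exact (oddsMap_mem_Icc (oddsMap_mem_Icc (one_sub_one_div_mem_Icc hαL))).1
  have hdecay : Tendsto (fun L => α L * exp ((3 * α L / 2) * (β L - 1 / 2))) atTop (𝓝 0) :=
    (tendsto_mul_exp_mul_nhds_zero hα ((hβ.sub_const (1 / 2)).const_mul (3 / 2))
      (by linarith [hbinf.2])).congr fun L => by ring_nf
  exact ⟨hbounds, tendsto_of_tendsto_of_tendsto_of_le_of_le' tendsto_const_nhds hdecay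
    hx3_nonneg (hbounds.mono fun _ h => h.2)⟩
end
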